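/- arXiv:1903.01143 — 4 statements merged into one kernel-verified Lean document; each statement's English description precedes it below -/
import Mathlib

section
/- Let K₁, K₂, N, F be n×n matrices with K₁, K₂ invertible, ‖F K₂⁻¹‖ < 1 and ‖K₁⁻¹ F‖ < 1. Then ‖K₁ (N − (I − F K₂⁻¹)⁻¹ N (I − K₁⁻¹ F)⁻¹)‖ ≤ ‖K₁‖·‖N‖·‖F‖·(‖K₁⁻¹‖ + ‖K₂⁻¹‖/(1 − ‖F‖·‖K₂⁻¹‖)) · 1/(1 − ‖K₁⁻¹‖·‖F‖), provided also ‖F‖·‖K₂⁻¹‖ < 1 and ‖K₁⁻¹‖·‖F‖ < 1. -/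
open scoped Matrix.Norms.L2Operator

/-!
Put `a = (1 - F K₂⁻¹)⁻¹` and `b = (1 - K₁⁻¹ F)⁻¹`. Since `a F K₂⁻¹ = a - 1` and
`K₁⁻¹ F b = b - 1`, the difference is `N - a N b = -(a F K₂⁻¹) N b - N (K₁⁻¹ F) b`, in which
every term carries a factor `F`. The Neumann series bounds `‖a‖` and `‖b‖`, and submultiplicativity
does the rest.
-/

theorem sub_mul_mul_eq_of_mul_eq_sub_one {R : Type*} [Ring R] {a b p q : R} (N : R)
    (ha : a * p = a - 1) (hb : q * b = b - 1) :
    N - a * N * b = -(a * p * (N * b)) - N * (q * b) := by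
  rw [ha, hb]
  noncomm_ring

section NormedRing

variable {R : Type*} [NormedRing R] [HasSummableGeomSeries R]

theorem norm_inverse_one_sub_le (h1 : ‖(1 : R)‖ ≤ 1) {t : R} {s : ℝ} (hts : ‖t‖ ≤ s)
    (hs : s < 1) : ‖Ring.inverse (1 - t)‖ ≤ (1 - s)⁻¹ := by
  have ht : ‖t‖ < 1 := hts.trans_lt hs
  calc ‖Ring.inverse (1 - t)‖ ≤ ‖(1 : R)‖ - 1 + (1 - ‖t‖)⁻¹ := by
        rw [← geom_series_eq_inverse t ht]
        exact tsum_geometric_le_of_norm_lt_one t ht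
    _ ≤ (1 - ‖t‖)⁻¹ := by linarith
    _ ≤ (1 - s)⁻¹ := by gcongr

theorem inverse_one_sub_mul_self {t : R} (ht : ‖t‖ < 1) :
    Ring.inverse (1 - t) * t = Ring.inverse (1 - t) - 1 := by
  calc Ring.inverse (1 - t) * t = Ring.inverse (1 - t) * 1 - Ring.inverse (1 - t) * (1 - t) := by
        noncomm_ring
    _ = Ring.inverse (1 - t) - 1 := by
        rw [mul_one, Ring.inverse_mul_cancel _ (isUnit_one_sub_of_norm_lt_one ht)]

theorem mul_inverse_one_sub_self {t : R} (ht : ‖t‖ < 1) :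
    t * Ring.inverse (1 - t) = Ring.inverse (1 - t) - 1 := by
  calc t * Ring.inverse (1 - t) = 1 * Ring.inverse (1 - t) - (1 - t) * Ring.inverse (1 - t) := by
        noncomm_ring
    _ = Ring.inverse (1 - t) - 1 := by
        rw [one_mul, Ring.mul_inverse_cancel _ (isUnit_one_sub_of_norm_lt_one ht)]

theorem norm_mul_sub_inverse_mul_inverse_le (h1 : ‖(1 : R)‖ ≤ 1) (k l₁ l₂ N F : R)
    (h₂ : ‖F‖ * ‖l₂‖ < 1) (h₁ : ‖l₁‖ * ‖F‖ < 1) :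
    ‖k * (N - Ring.inverse (1 - F * l₂) * N * Ring.inverse (1 - l₁ * F))‖ ≤
      ‖k‖ * ‖N‖ * ‖F‖ * (‖l₁‖ + ‖l₂‖ / (1 - ‖F‖ * ‖l₂‖)) * (1 / (1 - ‖l₁‖ * ‖F‖)) := by
  set p := F * l₂
  set q := l₁ * F
  set a := Ring.inverse (1 - p)
  set b := Ring.inverse (1 - q)
  have hp : ‖p‖ ≤ ‖F‖ * ‖l₂‖ := norm_mul_le F l₂
  have hq : ‖q‖ ≤ ‖l₁‖ * ‖F‖ := norm_mul_le l₁ F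
  have ha : ‖a‖ ≤ (1 - ‖F‖ * ‖l₂‖)⁻¹ := norm_inverse_one_sub_le h1 hp h₂
  have hb : ‖b‖ ≤ (1 - ‖l₁‖ * ‖F‖)⁻¹ := norm_inverse_one_sub_le h1 hq h₁
  have hdiff : N - a * N * b = -(a * p * (N * b)) - N * (q * b) :=
    sub_mul_mul_eq_of_mul_eq_sub_one N (inverse_one_sub_mul_self (hp.trans_lt h₂))
      (mul_inverse_one_sub_self (hq.trans_lt h₁))
  calc ‖k * (N - a * N * b)‖
      ≤ ‖k‖ * (‖a‖ * ‖p‖ * (‖N‖ * ‖b‖) + ‖N‖ * (‖q‖ * ‖b‖)) := by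
        refine (norm_mul_le _ _).trans ?_
        rw [hdiff]
        gcongr
        refine (norm_sub_le _ _).trans ?_
        rw [norm_neg]
        gcongr <;> refine (norm_mul_le _ _).trans ?_ <;> gcongr <;> exact norm_mul_le _ _
    _ ≤ ‖k‖ * ((1 - ‖F‖ * ‖l₂‖)⁻¹ * (‖F‖ * ‖l₂‖) * (‖N‖ * (1 - ‖l₁‖ * ‖F‖)⁻¹) +
          ‖N‖ * (‖l₁‖ * ‖F‖ * (1 - ‖l₁‖ * ‖F‖)⁻¹)) := by
        gcongr
    _ = ‖k‖ * ‖N‖ * ‖F‖ * (‖l₁‖ + ‖l₂‖ / (1 - ‖F‖ * ‖l₂‖)) * (1 / (1 - ‖l₁‖ * ‖F‖)) := by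
        field_simp
        ring

end NormedRing

theorem Matrix.l2_opNorm_one_le {𝕜 n : Type*} [RCLike 𝕜] [Fintype n] [DecidableEq n] :
    ‖(1 : Matrix n n 𝕜)‖ ≤ 1 := by
  rw [Matrix.cstar_norm_def, map_one]
  exact ContinuousLinearMap.norm_id_le

theorem U2_bound_general {n : Type*} [Fintype n] [DecidableEq n]
    (K₁ K₂ N F : Matrix n n ℂ)
    (h₂' : ‖F‖ * ‖K₂⁻¹‖ < 1) (h₁' : ‖K₁⁻¹‖ * ‖F‖ < 1) :
    ‖K₁ * (N - (1 - F * K₂⁻¹)⁻¹ * N * (1 - K₁⁻¹ * F)⁻¹)‖ ≤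
      ‖K₁‖ * ‖N‖ * ‖F‖ * (‖K₁⁻¹‖ + ‖K₂⁻¹‖ / (1 - ‖F‖ * ‖K₂⁻¹‖)) *
        (1 / (1 - ‖K₁⁻¹‖ * ‖F‖)) := by
  rw [Matrix.nonsing_inv_eq_ringInverse (1 - F * K₂⁻¹),
    Matrix.nonsing_inv_eq_ringInverse (1 - K₁⁻¹ * F)]
  exact norm_mul_sub_inverse_mul_inverse_le Matrix.l2_opNorm_one_le K₁ _ _ N F h₂' h₁'

theorem U2_bound {n : Type*} [Fintype n] [DecidableEq n]
    (K₁ K₂ N F : Matrix n n ℂ) (hK₁ : IsUnit K₁) (hK₂ : IsUnit K₂)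
    (h₂ : ‖F * K₂⁻¹‖ < 1) (h₁ : ‖K₁⁻¹ * F‖ < 1)
    (h₂' : ‖F‖ * ‖K₂⁻¹‖ < 1) (h₁' : ‖K₁⁻¹‖ * ‖F‖ < 1) :
    ‖K₁ * (N - (1 - F * K₂⁻¹)⁻¹ * N * (1 - K₁⁻¹ * F)⁻¹)‖ ≤
      ‖K₁‖ * ‖N‖ * ‖F‖ * (‖K₁⁻¹‖ + ‖K₂⁻¹‖ / (1 - ‖F‖ * ‖K₂⁻¹‖)) *
        (1 / (1 - ‖K₁⁻¹‖ * ‖F‖)) :=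
  U2_bound_general K₁ K₂ N F h₂' h₁'
end

section
/- Let A, N, b, c define a bilinear system with A Hurwitz (all eigenvalues of A have negative real part). For s₁, s₂ ∈ ℂ define the second-order transfer function H₂(s₁,s₂) = c (s₂ I − A)⁻¹ N (s₁ I − A)⁻¹ b, and for a perturbation F define H̃₂ analogously with A replaced by A + F. Assume sup_{ω∈ℝ} ‖(iω I − A)⁻¹‖ < 1 and ‖F‖ < 1. Then sup_{ω₁,ω₂ ∈ ℝ} ‖H₂(iω₁, iω₂) − H̃₂(iω₁, iω₂)‖ ≤ C · ‖F‖ for a constant C depending only on ‖c‖, ‖b‖, ‖N‖, and sup_{ω} ‖(iωI − A)⁻¹‖ (and not on F). -/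
open scoped Matrix.Norms.L2Operator
open Matrix

/-- The resolvent `(s I - A)⁻¹` of a complex square matrix. -/
noncomputable def resolv {n : Type*} [Fintype n] [DecidableEq n]
    (A : Matrix n n ℂ) (s : ℂ) : Matrix n n ℂ :=
  (s • (1 : Matrix n n ℂ) - A)⁻¹

/-- The second-order transfer function `H₂(s₁,s₂) = c (s₂ I − A)⁻¹ N (s₁ I − A)⁻¹ b`
of a bilinear system `(A, N, b, c)` (with real data, evaluated at complex
frequencies). -/
noncomputable def H2 {n : Type*} [Fintype n] [DecidableEq n]
    (A N : Matrix n n ℝ) (b c : n → ℝ) (s₁ s₂ : ℂ) : ℂ :=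
  (fun i => (c i : ℂ)) ⬝ᵥ ((resolv (A.map (Complex.ofReal ·)) s₂ *
      N.map (Complex.ofReal ·) *
      resolv (A.map (Complex.ofReal ·)) s₁) *ᵥ (fun i => (b i : ℂ)))

/-! Write `R(s) = (sI - A)⁻¹` and `T(s)` for the resolvent of `A + F`. The resolvent is
continuous off the spectrum and tends to `0` at infinity, so it is bounded on the imaginary axis,
where `‖R‖ ≤ r < 1`. Hence `‖F R‖ < 1` and the second resolvent identity `T = R + R F T` gives
`‖T‖ ≤ r / (1 - r)` and `‖R - T‖ ≤ r ‖F‖ r / (1 - r)`. Telescoping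
`R₂ N R₁ - T₂ N T₁ = (R₂ - T₂) N R₁ + T₂ N (R₁ - T₁)` bounds the difference of the kernels by a
multiple of `‖N‖ ‖F‖`, and Cauchy–Schwarz turns this into a bound for `H₂ - H̃₂`. -/

theorem norm_mul_mul_sub_mul_mul_le {R : Type*} [NormedRing R] (x₁ x₂ y₁ y₂ m : R) :
    ‖x₂ * m * x₁ - y₂ * m * y₁‖ ≤ ‖x₂ - y₂‖ * ‖m‖ * ‖x₁‖ + ‖y₂‖ * ‖m‖ * ‖x₁ - y₁‖ := by
  rw [show x₂ * m * x₁ - y₂ * m * y₁ = (x₂ - y₂) * m * x₁ + y₂ * m * (x₁ - y₁) by noncomm_ring]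
  refine (norm_add_le _ _).trans (add_le_add ?_ ?_) <;>
    exact (norm_mul_le _ _).trans (by gcongr; exact norm_mul_le _ _)

namespace spectrum

variable {𝕜 A : Type*} [NontriviallyNormedField 𝕜] [NormedRing A] [NormedAlgebra 𝕜 A]
  [CompleteSpace A] {a f : A} {s : 𝕜}

theorem bddAbove_norm_resolvent_image [ProperSpace 𝕜] {S : Set 𝕜} (hS : IsClosed S)
    (hSa : S ⊆ resolventSet 𝕜 a) : BddAbove ((‖resolvent a ·‖) '' S) := by
  obtain ⟨ρ, -, hρ⟩ := Filter.atTop_basis_Ioi.cobounded_of_norm.eventually_iff.mp <|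
    (resolvent_tendsto_cobounded (𝕜 := 𝕜) a).norm.eventually
      (gt_mem_nhds (norm_zero.trans_lt one_pos))
  have hcont : ContinuousOn (‖resolvent a ·‖) S := fun z hz =>
    (hasDerivAt_resolvent_const_left (hSa hz)).continuousAt.norm.continuousWithinAt
  obtain ⟨B, hB⟩ := ((isCompact_closedBall (0 : 𝕜) ρ).inter_left hS).bddAbove_image
    (hcont.mono Set.inter_subset_left)
  refine ⟨max B 1, ?_⟩
  rintro _ ⟨z, hz, rfl⟩
  rcases le_or_gt ‖z‖ ρ with hzρ | hzρ
  · exact le_max_of_le_left (hB ⟨z, ⟨hz, mem_closedBall_zero_iff.mpr hzρ⟩, rfl⟩)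
  · exact le_max_of_le_right (hρ hzρ).le

theorem mem_resolventSet_add_of_norm_mul_lt_one (hs : s ∈ resolventSet 𝕜 a)
    (hf : ‖f‖ * ‖resolvent a s‖ < 1) : s ∈ resolventSet 𝕜 (a + f) := by
  have hfR : ‖f * resolvent a s‖ < 1 := (norm_mul_le _ _).trans_lt hf
  rw [mem_resolventSet_iff]
  convert (Units.oneSub _ hfR).isUnit.mul hs using 1
  rw [Units.val_oneSub, sub_mul, one_mul, mul_assoc, resolvent, Ring.inverse_mul_cancel _ hs,
    mul_one]
  abel

theorem resolvent_sub_resolvent_add (hs : s ∈ resolventSet 𝕜 a)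
    (hf : ‖f‖ * ‖resolvent a s‖ < 1) :
    resolvent a s - resolvent (a + f) s = -(resolvent a s * f * resolvent (a + f) s) := by
  rw [resolvent_sub_resolvent hs (mem_resolventSet_add_of_norm_mul_lt_one hs hf),
    sub_add_cancel_left, mul_neg, neg_mul]

theorem norm_resolvent_add_le (hs : s ∈ resolventSet 𝕜 a) {r : ℝ} (hr : ‖resolvent a s‖ ≤ r)
    (hfr : ‖f‖ * r < 1) : ‖resolvent (a + f) s‖ ≤ r / (1 - ‖f‖ * r) := by
  have hf : ‖f‖ * ‖resolvent a s‖ < 1 := lt_of_le_of_lt (by gcongr) hfr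
  have hT : resolvent (a + f) s = resolvent a s + resolvent a s * f * resolvent (a + f) s := by
    rw [← sub_eq_iff_eq_add', ← neg_sub, resolvent_sub_resolvent_add hs hf, neg_neg]
  have hT_le : ‖resolvent (a + f) s‖ ≤ r + r * ‖f‖ * ‖resolvent (a + f) s‖ :=
    calc ‖resolvent (a + f) s‖
        = ‖resolvent a s + resolvent a s * f * resolvent (a + f) s‖ := congrArg _ hT
      _ ≤ ‖resolvent a s‖ + ‖resolvent a s‖ * ‖f‖ * ‖resolvent (a + f) s‖ := by
          grw [norm_add_le, norm_mul_le, norm_mul_le]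
      _ ≤ r + r * ‖f‖ * ‖resolvent (a + f) s‖ := by gcongr
  rw [le_div_iff₀ (by linarith)]
  linarith

theorem norm_resolvent_sub_resolvent_add_le (hs : s ∈ resolventSet 𝕜 a) {r : ℝ}
    (hr : ‖resolvent a s‖ ≤ r) (hfr : ‖f‖ * r < 1) :
    ‖resolvent a s - resolvent (a + f) s‖ ≤ r * ‖f‖ * (r / (1 - ‖f‖ * r)) := by
  have hf : ‖f‖ * ‖resolvent a s‖ < 1 := lt_of_le_of_lt (by gcongr) hfr
  have hr0 : 0 ≤ r := (norm_nonneg _).trans hr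
  rw [resolvent_sub_resolvent_add hs hf, norm_neg]
  grw [norm_mul_le, norm_mul_le, hr, norm_resolvent_add_le hs hr hfr]

theorem norm_resolvent_mul_mul_resolvent_sub_le {s₁ s₂ : 𝕜} (h₁ : s₁ ∈ resolventSet 𝕜 a)
    (h₂ : s₂ ∈ resolventSet 𝕜 a) {r : ℝ} (hr₁ : ‖resolvent a s₁‖ ≤ r)
    (hr₂ : ‖resolvent a s₂‖ ≤ r) (hr : r < 1) (hf : ‖f‖ ≤ 1) (m : A) :
    ‖resolvent a s₂ * m * resolvent a s₁ - resolvent (a + f) s₂ * m * resolvent (a + f) s₁‖ ≤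
      r * (r / (1 - r)) * (r + r / (1 - r)) * ‖m‖ * ‖f‖ := by
  have hr0 : 0 ≤ r := (norm_nonneg _).trans hr₁
  have hfr_le : ‖f‖ * r ≤ r := mul_le_of_le_one_left hr0 hf
  have hfr : ‖f‖ * r < 1 := hfr_le.trans_lt hr
  have hρ : r / (1 - ‖f‖ * r) ≤ r / (1 - r) := by gcongr
  have hT₂ : ‖resolvent (a + f) s₂‖ ≤ r / (1 - r) := (norm_resolvent_add_le h₂ hr₂ hfr).trans hρ
  have hD₁ : ‖resolvent a s₁ - resolvent (a + f) s₁‖ ≤ r * ‖f‖ * (r / (1 - r)) :=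
    (norm_resolvent_sub_resolvent_add_le h₁ hr₁ hfr).trans (by gcongr)
  have hD₂ : ‖resolvent a s₂ - resolvent (a + f) s₂‖ ≤ r * ‖f‖ * (r / (1 - r)) :=
    (norm_resolvent_sub_resolvent_add_le h₂ hr₂ hfr).trans (by gcongr)
  calc _ ≤ ‖resolvent a s₂ - resolvent (a + f) s₂‖ * ‖m‖ * ‖resolvent a s₁‖ +
        ‖resolvent (a + f) s₂‖ * ‖m‖ * ‖resolvent a s₁ - resolvent (a + f) s₁‖ :=
        norm_mul_mul_sub_mul_mul_le _ _ _ _ _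
    _ ≤ r * ‖f‖ * (r / (1 - r)) * ‖m‖ * r +
        r / (1 - r) * ‖m‖ * (r * ‖f‖ * (r / (1 - r))) := by gcongr
    _ = r * (r / (1 - r)) * (r + r / (1 - r)) * ‖m‖ * ‖f‖ := by ring

end spectrum

open WithLp in
theorem Matrix.norm_dotProduct_mulVec_le {𝕜 m n : Type*} [RCLike 𝕜] [Fintype m] [Fintype n]
    [DecidableEq n] (M : Matrix m n 𝕜) (u : m → 𝕜) (v : n → 𝕜) :
    ‖u ⬝ᵥ (M *ᵥ v)‖ ≤ ‖toLp 2 u‖ * ‖M‖ * ‖toLp 2 v‖ := by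
  have hinner : u ⬝ᵥ (M *ᵥ v) = inner 𝕜 (toLp 2 (star u)) (toLp 2 (M *ᵥ v)) := by
    rw [EuclideanSpace.inner_toLp_toLp, star_star, dotProduct_comm]
  have hstar : ‖toLp 2 (star u)‖ = ‖toLp 2 u‖ := by
    simp [EuclideanSpace.norm_eq]
  rw [hinner, mul_assoc, ← hstar]
  grw [norm_inner_le_norm]
  gcongr
  exact l2_opNorm_mulVec M (toLp 2 v)

theorem resolv_eq_resolvent {n : Type*} [Fintype n] [DecidableEq n] (A : Matrix n n ℂ) (s : ℂ) :
    resolv A s = resolvent A s := by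
  rw [resolv, resolvent, Algebra.algebraMap_eq_smul_one, nonsing_inv_eq_ringInverse]

theorem H2_sub_H2_add {n : Type*} [Fintype n] [DecidableEq n] (A F N : Matrix n n ℝ)
    (b c : n → ℝ) (s₁ s₂ : ℂ) :
    H2 A N b c s₁ s₂ - H2 (A + F) N b c s₁ s₂ =
      (fun i => (c i : ℂ)) ⬝ᵥ
        ((resolvent (A.map (Complex.ofReal ·)) s₂ * N.map (Complex.ofReal ·) *
            resolvent (A.map (Complex.ofReal ·)) s₁ -
          resolvent (A.map (Complex.ofReal ·) + F.map (Complex.ofReal ·)) s₂ *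
            N.map (Complex.ofReal ·) *
            resolvent (A.map (Complex.ofReal ·) + F.map (Complex.ofReal ·)) s₁) *ᵥ
          (fun i => (b i : ℂ))) := by
  rw [H2, H2, Matrix.map_add _ Complex.ofReal_add, sub_mulVec, dotProduct_sub]
  simp only [resolv_eq_resolvent]

theorem H2_perturbation_bound {n : Type*} [Fintype n] [DecidableEq n]
    (A N : Matrix n n ℝ) (b c : n → ℝ)
    (hHurwitz : ∀ μ ∈ spectrum ℂ (A.map (Complex.ofReal ·)), μ.re < 0)
    (hres : (⨆ ω : ℝ, ‖resolv (A.map (Complex.ofReal ·)) (Complex.I * ω)‖) < 1) :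
    ∃ C : ℝ, ∀ F : Matrix n n ℝ,
      ‖F.map (Complex.ofReal ·)‖ < 1 →
      ∀ ω₁ ω₂ : ℝ,
        ‖H2 A N b c (Complex.I * ω₁) (Complex.I * ω₂) -
            H2 (A + F) N b c (Complex.I * ω₁) (Complex.I * ω₂)‖ ≤
          C * ‖F.map (Complex.ofReal ·)‖ := by
  set A' : Matrix n n ℂ := A.map (Complex.ofReal ·)
  have haxis : {z : ℂ | z.re = 0} ⊆ resolventSet ℂ A' := fun z hz =>
    by_contra fun hzσ => (hHurwitz z hzσ).ne hz
  have hbdd : BddAbove (Set.range fun ω : ℝ => ‖resolv A' (Complex.I * ω)‖) := by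
    refine (spectrum.bddAbove_norm_resolvent_image
      (isClosed_eq Complex.continuous_re continuous_const) haxis).mono ?_
    rintro _ ⟨ω, rfl⟩
    exact ⟨Complex.I * ω, by simp, by simp only [resolv_eq_resolvent]⟩
  -- `⨆` of an unbounded family is `0`, so `hres` bounds each resolvent only because of `hbdd`.
  set r := ⨆ ω : ℝ, ‖resolv A' (Complex.I * ω)‖
  have hr : ∀ ω : ℝ, ‖resolvent A' (Complex.I * ω)‖ ≤ r := fun ω =>
    resolv_eq_resolvent A' _ ▸ le_ciSup hbdd ω
  have hI : ∀ ω : ℝ, Complex.I * ω ∈ resolventSet ℂ A' := fun ω => haxis (by simp)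
  refine ⟨‖WithLp.toLp 2 (fun i => (c i : ℂ))‖ * (r * (r / (1 - r)) * (r + r / (1 - r))) *
    ‖N.map (Complex.ofReal ·)‖ * ‖WithLp.toLp 2 (fun i => (b i : ℂ))‖, fun F hF ω₁ ω₂ => ?_⟩
  rw [H2_sub_H2_add]
  grw [Matrix.norm_dotProduct_mulVec_le, spectrum.norm_resolvent_mul_mul_resolvent_sub_le
    (hI ω₁) (hI ω₂) (hr ω₁) (hr ω₂) hres hF.le]
  exact le_of_eq (by ring)
end

section
/- Let Kⱼ (j = 1,…,M) be invertible n×n matrices, N an n×n matrix, and F with ‖F‖ < 1; assume ‖Kⱼ⁻¹‖ < 1 for all j. Define U_M = K₁ ⋯ K_{M−1} ( N K_{M−1}⁻¹ ⋯ N K₂⁻¹ N − (I − F K_M⁻¹)⁻¹ N K_{M−1}⁻¹ (I − F K_{M−1}⁻¹)⁻¹ ⋯ N K₂⁻¹ (I − F K₂⁻¹)⁻¹ N (I − K₁⁻¹ F)⁻¹ ). Then the recursion U_{M+1} = K₁ ⋯ K_M ( N K_M⁻¹ K_{M−1}⁻¹ ⋯ K₁⁻¹ U_M − F K_{M+1}⁻¹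 (I − F K_{M+1}⁻¹)⁻¹ N K_M⁻¹ (I − F K_M⁻¹)⁻¹ ⋯ N K₂⁻¹ (I − F K₂⁻¹)⁻¹ N (I − K₁⁻¹ F)⁻¹ ) holds, where U_{M+1} is defined by the same formula as U_M with M replaced by M+1. -/
open scoped Matrix.Norms.L2Operator

variable {n : Type*} [Fintype n] [DecidableEq n]

/-- The ordered product `K₁ K₂ ⋯ K_{M−1}` (here `M = j + 2`). -/
noncomputable def Kprod (K : ℕ → Matrix n n ℂ) : ℕ → Matrix n n ℂ
  | 0 => K 1
  | j + 1 => Kprod K j * K (j + 2)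

/-- The ordered product `K_{M−1}⁻¹ ⋯ K₂⁻¹ K₁⁻¹` (here `M = j + 2`). -/
noncomputable def Kiprod (K : ℕ → Matrix n n ℂ) : ℕ → Matrix n n ℂ
  | 0 => (K 1)⁻¹
  | j + 1 => (K (j + 2))⁻¹ * Kiprod K j

/-- The unperturbed chain `N K_{M−1}⁻¹ N K_{M−2}⁻¹ ⋯ N K₂⁻¹ N` (here `M = j + 2`). -/
noncomputable def chainA (K : ℕ → Matrix n n ℂ) (N : Matrix n n ℂ) :
    ℕ → Matrix n n ℂ
  | 0 => N
  | j + 1 => N * (K (j + 2))⁻¹ * chainA K N j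

/-- The perturbed chain
`N K_{M−1}⁻¹ (I − F K_{M−1}⁻¹)⁻¹ ⋯ N K₂⁻¹ (I − F K₂⁻¹)⁻¹ N` (here `M = j + 2`). -/
noncomputable def chainB (K : ℕ → Matrix n n ℂ) (N F : Matrix n n ℂ) :
    ℕ → Matrix n n ℂ
  | 0 => N
  | j + 1 => N * (K (j + 2))⁻¹ * (1 - F * (K (j + 2))⁻¹)⁻¹ * chainB K N F j

/-- The perturbation term `U_M` (here `M = j + 2`):
`U_M = K₁ ⋯ K_{M−1} (chainA − (I − F K_M⁻¹)⁻¹ chainB (I − K₁⁻¹ F)⁻¹)`. -/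
noncomputable def Uterm (K : ℕ → Matrix n n ℂ) (N F : Matrix n n ℂ)
    (j : ℕ) : Matrix n n ℂ :=
  Kprod K j * (chainA K N j -
    (1 - F * (K (j + 2))⁻¹)⁻¹ * chainB K N F j * (1 - (K 1)⁻¹ * F)⁻¹)

/-!
`Kiprod` inverts `Kprod`, so `N K_M⁻¹ Kiprod U_M` is `N K_M⁻¹` times the bracket of `U_M`.
What remains is the resolvent identity `(I − X)⁻¹ = I + X (I − X)⁻¹` for `X = F K_{M+1}⁻¹`,
which holds because `‖X‖ < 1` makes `I − X` invertible.
-/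

theorem isUnit_one_sub_mul_of_norm_lt_one {R : Type*} [NormedRing R] [HasSummableGeomSeries R]
    {a b : R} (ha : ‖a‖ < 1) (hb : ‖b‖ < 1) : IsUnit (1 - a * b) :=
  (Units.oneSub (a * b) <| (norm_mul_le a b).trans_lt <|
    mul_lt_one_of_nonneg_of_lt_one_left (norm_nonneg a) ha hb.le).isUnit

theorem Matrix.inv_one_sub_eq_one_add_mul_inv {R : Type*} [CommRing R] {A : Matrix n n R}
    (h : IsUnit (1 - A)) : (1 - A)⁻¹ = 1 + A * (1 - A)⁻¹ := by
  have hinv := Matrix.mul_nonsing_inv _ ((1 - A).isUnit_iff_isUnit_det.mp h)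
  rwa [sub_mul, one_mul, sub_eq_iff_eq_add] at hinv

theorem Kiprod_mul_Kprod {K : ℕ → Matrix n n ℂ} (hK : ∀ i, IsUnit (K i)) :
    ∀ m, Kiprod K m * Kprod K m = 1
  | 0 => Matrix.nonsing_inv_mul _ ((K 1).isUnit_iff_isUnit_det.mp (hK 1))
  | m + 1 => by
    rw [Kiprod, Kprod, mul_assoc, ← mul_assoc (Kiprod K m), Kiprod_mul_Kprod hK m, one_mul,
      Matrix.nonsing_inv_mul _ ((K (m + 2)).isUnit_iff_isUnit_det.mp (hK (m + 2)))]

theorem Kiprod_mul_Uterm {K : ℕ → Matrix n n ℂ} (hK : ∀ i, IsUnit (K i)) (N F : Matrix n n ℂ)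
    (j : ℕ) :
    Kiprod K j * Uterm K N F j =
      chainA K N j - (1 - F * (K (j + 2))⁻¹)⁻¹ * chainB K N F j * (1 - (K 1)⁻¹ * F)⁻¹ := by
  rw [Uterm, ← mul_assoc, Kiprod_mul_Kprod hK, one_mul]

theorem Uterm_succ (K : ℕ → Matrix n n ℂ) (N F : Matrix n n ℂ) (j : ℕ) :
    Uterm K N F (j + 1) =
      Kprod K (j + 1) * (N * (K (j + 2))⁻¹ * chainA K N j -
        (1 - F * (K (j + 3))⁻¹)⁻¹ * chainB K N F (j + 1) * (1 - (K 1)⁻¹ * F)⁻¹) :=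
  rfl

theorem Uterm_recursion (K : ℕ → Matrix n n ℂ) (N F : Matrix n n ℂ)
    (hK : ∀ j, IsUnit (K j)) (hKi : ∀ j, ‖(K j)⁻¹‖ < 1) (hF : ‖F‖ < 1)
    (j : ℕ) :
    Uterm K N F (j + 1) =
      Kprod K (j + 1) *
        (N * (K (j + 2))⁻¹ * Kiprod K j * Uterm K N F j -
          F * (K (j + 3))⁻¹ * (1 - F * (K (j + 3))⁻¹)⁻¹ *
            chainB K N F (j + 1) * (1 - (K 1)⁻¹ * F)⁻¹) := by
  have hresolvent := Matrix.inv_one_sub_eq_one_add_mul_inv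
    (isUnit_one_sub_mul_of_norm_lt_one hF (hKi (j + 3)))
  rw [Uterm_succ, mul_assoc _ (Kiprod K j), Kiprod_mul_Uterm hK]
  conv_lhs => rw [hresolvent]
  rw [chainB]
  noncomm_ring
end

section
/- Let Kⱼ (j = 1,…,M) be invertible n×n matrices, N an n×n matrix, F an n×n matrix with ‖F‖ < 1 and ‖Kⱼ⁻¹‖ < 1 for all j. Define U_M as in the truncated Volterra perturbation term: U_M = K₁ ⋯ K_{M−1} ( N K_{M−1}⁻¹ ⋯ N K₂⁻¹ N − (I − F K_M⁻¹)⁻¹ N K_{M−1}⁻¹ (I − F K_{M−1}⁻¹)⁻¹ ⋯ N K₂⁻¹ (I − F K₂⁻¹)⁻¹ N (I − K₁⁻¹ F)⁻¹ ). Then there exists a constant C_M (depending on M, ‖N‖, ‖Kⱼ‖ and ‖Kⱼ⁻¹‖ but not on F) such that ‖U_M‖ ≤ C_M · ‖F‖. -/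
/-!
For `‖A‖ < 1` and `‖F‖ < 1` the Neumann series gives `‖(1 - F A)⁻¹‖ ≤ (1 - ‖A‖)⁻¹`, and
`(1 - F A)⁻¹ - 1 = F A (1 - F A)⁻¹` is then `O(‖F‖)`, uniformly on the unit ball. By induction on
`M` the perturbed chain stays bounded and differs from the unperturbed one by `O(‖F‖)`. Writing
`a`, `b` for the two chains and `R`, `L` for the outer resolvents,
`a - R b L = a (1 - L) + (a - b) L + (1 - R) b L` is a sum of `O(‖F‖)` terms.

The bounds are phrased as `=O[𝓟 (ball 0 1)]`: along a principal filter, big-O is exactly a bound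
`C ‖F‖` holding on the whole set.
-/

open scoped Matrix.Norms.L2Operator

variable {n : Type*} [Fintype n] [DecidableEq n]

open Asymptotics Filter Metric

section
variable {𝕜 : Type*} [RCLike 𝕜]

lemma Matrix.l2_opNorm_one_le_s16 : ‖(1 : Matrix n n 𝕜)‖ ≤ 1 := by
  rw [Matrix.cstar_norm_def, map_one]
  exact ContinuousLinearMap.norm_id_le

lemma Matrix.norm_inv_one_sub_le {X : Matrix n n 𝕜} (h : ‖X‖ < 1) :
    ‖(1 - X)⁻¹‖ ≤ (1 - ‖X‖)⁻¹ := by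
  rw [Matrix.nonsing_inv_eq_ringInverse, NormedRing.inverse_one_sub X h]
  have hgeom := tsum_geometric_le_of_norm_lt_one X h
  have hone := Matrix.l2_opNorm_one_le_s16 (n := n) (𝕜 := 𝕜)
  change ‖∑' k, X ^ k‖ ≤ _
  linarith

lemma Matrix.inv_one_sub_sub_one {X : Matrix n n 𝕜} (h : ‖X‖ < 1) :
    (1 - X)⁻¹ - 1 = X * (1 - X)⁻¹ := by
  have hdet : IsUnit (1 - X).det :=
    (Matrix.isUnit_iff_isUnit_det _).mp (isUnit_one_sub_of_norm_lt_one h)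
  calc (1 - X)⁻¹ - 1 = (1 - X)⁻¹ - (1 - X) * (1 - X)⁻¹ := by
        rw [Matrix.mul_nonsing_inv _ hdet]
    _ = X * (1 - X)⁻¹ := by rw [sub_mul, one_mul, sub_sub_cancel]

variable {X : Matrix n n 𝕜 → Matrix n n 𝕜} {c : ℝ}

lemma Matrix.isBigO_inv_one_sub_of_norm_le (hc₀ : 0 ≤ c) (hc : c < 1)
    (hX : ∀ F, ‖X F‖ ≤ c * ‖F‖) :
    (fun F => (1 - X F)⁻¹) =O[𝓟 (ball 0 1)] fun _ => (1 : ℝ) := by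
  refine IsBigO.of_bound (1 - c)⁻¹ (eventually_principal.2 fun F hF => ?_)
  have hXF : ‖X F‖ ≤ c := (hX F).trans (mul_le_of_le_one_right hc₀ (mem_ball_zero_iff.1 hF).le)
  rw [norm_one, mul_one]
  exact (norm_inv_one_sub_le (hXF.trans_lt hc)).trans (by gcongr)

lemma Matrix.isBigO_inv_one_sub_sub_one_of_norm_le (hc₀ : 0 ≤ c) (hc : c < 1)
    (hX : ∀ F, ‖X F‖ ≤ c * ‖F‖) :
    (fun F => (1 - X F)⁻¹ - 1) =O[𝓟 (ball 0 1)] fun F => ‖F‖ := by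
  have hXO : X =O[𝓟 (ball 0 1)] fun F => ‖F‖ :=
    IsBigO.of_bound c (Eventually.of_forall fun F => by rw [norm_norm]; exact hX F)
  refine (hXO.mul (isBigO_inv_one_sub_of_norm_le hc₀ hc hX)).congr' ?_ (by simp)
  refine eventually_principal.2 fun F hF => (inv_one_sub_sub_one ?_).symm
  exact (hX F).trans_lt
    (mul_lt_one_of_nonneg_of_lt_one_right hc.le (norm_nonneg F) (mem_ball_zero_iff.1 hF))

lemma Matrix.isBigO_inv_one_sub_mul_right {A : Matrix n n 𝕜} (hA : ‖A‖ < 1) :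
    (fun F => (1 - F * A)⁻¹) =O[𝓟 (ball 0 1)] (fun _ => (1 : ℝ)) ∧
      (fun F => (1 - F * A)⁻¹ - 1) =O[𝓟 (ball 0 1)] fun F => ‖F‖ :=
  have hX (F : Matrix n n 𝕜) : ‖F * A‖ ≤ ‖A‖ * ‖F‖ := (norm_mul_le F A).trans_eq (mul_comm _ _)
  ⟨isBigO_inv_one_sub_of_norm_le (norm_nonneg A) hA hX,
    isBigO_inv_one_sub_sub_one_of_norm_le (norm_nonneg A) hA hX⟩

lemma Matrix.isBigO_inv_one_sub_mul_left {A : Matrix n n 𝕜} (hA : ‖A‖ < 1) :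
    (fun F => (1 - A * F)⁻¹) =O[𝓟 (ball 0 1)] (fun _ => (1 : ℝ)) ∧
      (fun F => (1 - A * F)⁻¹ - 1) =O[𝓟 (ball 0 1)] fun F => ‖F‖ :=
  ⟨isBigO_inv_one_sub_of_norm_le (norm_nonneg A) hA (norm_mul_le A),
    isBigO_inv_one_sub_sub_one_of_norm_le (norm_nonneg A) hA (norm_mul_le A)⟩

end

variable {K : ℕ → Matrix n n ℂ} {N : Matrix n n ℂ}

lemma isBigO_chainB (hKi : ∀ j, ‖(K j)⁻¹‖ < 1) :
    ∀ j, (fun F => chainB K N F j) =O[𝓟 (ball 0 1)] fun _ => (1 : ℝ)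
  | 0 => isBigO_const_const N one_ne_zero _
  | j + 1 => by
    simp only [chainB]
    simpa only [mul_one] using ((isBigO_const_const (N * (K (j + 2))⁻¹) one_ne_zero _).mul
      (Matrix.isBigO_inv_one_sub_mul_right (hKi (j + 2))).1).mul (isBigO_chainB hKi j)

lemma isBigO_chainB_sub_chainA (hKi : ∀ j, ‖(K j)⁻¹‖ < 1) :
    ∀ j, (fun F => chainB K N F j - chainA K N j) =O[𝓟 (ball 0 1)] fun F => ‖F‖
  | 0 => by simpa [chainA, chainB] using isBigO_zero _ _
  | j + 1 => by
    have hstep (F : Matrix n n ℂ) : chainB K N F (j + 1) - chainA K N (j + 1) =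
        N * (K (j + 2))⁻¹ * (((1 - F * (K (j + 2))⁻¹)⁻¹ - 1) * chainB K N F j +
          (chainB K N F j - chainA K N j)) := by
      simp only [chainA, chainB]; noncomm_ring
    simp only [hstep]
    refine IsBigO.const_mul_left (IsBigO.add ?_ (isBigO_chainB_sub_chainA hKi j)) _
    simpa using (Matrix.isBigO_inv_one_sub_mul_right (hKi (j + 2))).2.mul (isBigO_chainB hKi j)

theorem Uterm_big_O_general (K : ℕ → Matrix n n ℂ) (N : Matrix n n ℂ)
    (hKi : ∀ j, ‖(K j)⁻¹‖ < 1) (j : ℕ) :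
    ∃ C : ℝ, ∀ F : Matrix n n ℂ, ‖F‖ < 1 →
      ‖Uterm K N F j‖ ≤ C * ‖F‖ := by
  obtain ⟨-, hR₁⟩ := Matrix.isBigO_inv_one_sub_mul_right (hKi (j + 2))
  obtain ⟨hL, hL₁⟩ := Matrix.isBigO_inv_one_sub_mul_left (hKi 1)
  have hB := isBigO_chainB (N := N) hKi j
  have hBA := isBigO_chainB_sub_chainA (N := N) hKi j
  have hsplit (a b R L : Matrix n n ℂ) :
      a - R * b * L = a * -(L - 1) + -(b - a) * L + -(R - 1) * b * L := by noncomm_ring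
  have hU : (fun F => Uterm K N F j) =O[𝓟 (ball 0 1)] fun F => ‖F‖ := by
    simp only [Uterm, hsplit]
    refine IsBigO.const_mul_left ((IsBigO.add ?_ ?_).add ?_) _
    · exact hL₁.neg_left.const_mul_left _
    · simpa using hBA.neg_left.mul hL
    · simpa using (hR₁.neg_left.mul hB).mul hL
  obtain ⟨C, hC⟩ := isBigO_principal.1 hU
  exact ⟨C, fun F hF => by simpa using hC F (mem_ball_zero_iff.2 hF)⟩

theorem Uterm_big_O (K : ℕ → Matrix n n ℂ) (N : Matrix n n ℂ)
    (hK : ∀ j, IsUnit (K j)) (hKi : ∀ j, ‖(K j)⁻¹‖ < 1) (j : ℕ) :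
    ∃ C : ℝ, ∀ F : Matrix n n ℂ, ‖F‖ < 1 →
      ‖Uterm K N F j‖ ≤ C * ‖F‖ :=
  Uterm_big_O_general K N hKi j
end
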